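/- arXiv:2410.01519 — 8 statements merged into one kernel-verified Lean document; each statement's English description precedes it below -/
import Mathlib

section
/- Let N ≥ 2 and (m_k, r_k, i_k) ∈ ℤ × ℤ_{>0} × ℤ for 1 ≤ k ≤ N with m_k > m_{k−1} for all 1 < k ≤ N. Suppose that for every 1 < k ≤ N there is an integer p_k with m_k − m_{k−1} = r_{k−1} + r_k + |i_{k−1} − i_k| − 2p_k and p_k < min(r_{k−1}, r_k). For 1 ≤ k < l ≤ N define p_{l,k} = (r_l + r_k + |i_l − i_k| − (m_l − m_k))/2 whenever this is an integer. Then p_{N,1} is an integer with p_{N,1} < min(r_1, r_N), and for all 1 ≤ k < l ≤ N with (k,l) ≠ (1,N) one has p_{N,1} < p_{l,k} < min(r_k, r_l). -/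
private def d4 (m r i : ℕ → ℤ) (l k : ℕ) : ℤ :=
  r l + r k + |i l - i k| - (m l - m k)

private lemma habs4 (a : ℤ) : ∃ u : ℤ, |a| = a + 2 * u := by
  rcases abs_choice a with h | h
  · exact ⟨0, by omega⟩
  · exact ⟨-a, by omega⟩

private lemma stepR4 (N : ℕ) (m r i : ℕ → ℤ)
    (h : ∀ k, 1 < k → k ≤ N →
      ∃ p : ℤ, m k - m (k - 1) = r (k - 1) + r k + |i (k - 1) - i k| - 2 * p ∧
        p < min (r (k - 1)) (r k))
    (k l : ℕ) (hl : 1 ≤ l) (hlN : l < N) :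
    ∃ p t : ℤ, d4 m r i (l + 1) k = d4 m r i l k + 2 * p - 2 * r l + 2 * t ∧ t ≤ 0 ∧
      p < min (r l) (r (l + 1)) := by
  obtain ⟨p, hp, hpm⟩ := h (l + 1) (by omega) (by omega)
  simp only [Nat.add_sub_cancel] at hp hpm
  obtain ⟨u1, hu1⟩ := habs4 (i (l + 1) - i k)
  obtain ⟨u2, hu2⟩ := habs4 (i l - i k)
  obtain ⟨u3, hu3⟩ := habs4 (i l - i (l + 1))
  refine ⟨p, (i (l + 1) - i l) + u1 - u2 - u3, ?_, ?_, hpm⟩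
  · simp only [d4]; linarith
  · have ht : |i (l + 1) - i k| ≤ |i (l + 1) - i l| + |i l - i k| := abs_sub_le _ _ _
    have hc : |i (l + 1) - i l| = |i l - i (l + 1)| := abs_sub_comm _ _
    linarith

private lemma stepL4 (N : ℕ) (m r i : ℕ → ℤ)
    (h : ∀ k, 1 < k → k ≤ N →
      ∃ p : ℤ, m k - m (k - 1) = r (k - 1) + r k + |i (k - 1) - i k| - 2 * p ∧
        p < min (r (k - 1)) (r k))
    (l k : ℕ) (hk : 1 ≤ k) (hkN : k < N) :
    ∃ p t : ℤ, d4 m r i l k = d4 m r i l (k + 1) + 2 * p - 2 * r (k + 1) + 2 * t ∧ t ≤ 0 ∧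
      p < min (r k) (r (k + 1)) := by
  obtain ⟨p, hp, hpm⟩ := h (k + 1) (by omega) (by omega)
  simp only [Nat.add_sub_cancel] at hp hpm
  obtain ⟨u1, hu1⟩ := habs4 (i l - i k)
  obtain ⟨u2, hu2⟩ := habs4 (i l - i (k + 1))
  obtain ⟨u3, hu3⟩ := habs4 (i k - i (k + 1))
  refine ⟨p, (i (k + 1) - i k) + u1 - u2 - u3, ?_, ?_, hpm⟩
  · simp only [d4]; linarith
  · have ht : |i l - i k| ≤ |i l - i (k + 1)| + |i (k + 1) - i k| := abs_sub_le _ _ _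
    have hc : |i (k + 1) - i k| = |i k - i (k + 1)| := abs_sub_comm _ _
    linarith

private lemma decrR4 (N : ℕ) (m r i : ℕ → ℤ)
    (h : ∀ k, 1 < k → k ≤ N →
      ∃ p : ℤ, m k - m (k - 1) = r (k - 1) + r k + |i (k - 1) - i k| - 2 * p ∧
        p < min (r (k - 1)) (r k)) :
    ∀ n k l, 1 ≤ l → l + n ≤ N → d4 m r i (l + n) k ≤ d4 m r i l k - 2 * n := by
  intro n
  induction n with
  | zero => intro k l _ _; simp
  | succ n ih =>
      intro k l hl hN
      have hih := ih k l hl (by omega)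
      obtain ⟨p, t, heq, ht, hpm⟩ := stepR4 N m r i h k (l + n) (by omega) (by omega)
      rw [lt_min_iff] at hpm
      have : d4 m r i (l + (n + 1)) k = d4 m r i (l + n + 1) k := by rw [Nat.add_assoc]
      rw [this, heq]
      push_cast
      linarith [hpm.1]

private lemma decrL4 (N : ℕ) (m r i : ℕ → ℤ)
    (h : ∀ k, 1 < k → k ≤ N →
      ∃ p : ℤ, m k - m (k - 1) = r (k - 1) + r k + |i (k - 1) - i k| - 2 * p ∧
        p < min (r (k - 1)) (r k)) :
    ∀ n k l, 1 ≤ k → k + n ≤ N → d4 m r i l k ≤ d4 m r i l (k + n) - 2 * n := by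
  intro n
  induction n with
  | zero => intro k l _ _; simp
  | succ n ih =>
      intro k l hk hN
      have hih := ih (k + 1) l (by omega) (by omega)
      have he : k + 1 + n = k + (n + 1) := by omega
      rw [he] at hih
      obtain ⟨p, t, heq, ht, hpm⟩ := stepL4 N m r i h l k hk (by omega)
      rw [lt_min_iff] at hpm
      rw [heq]
      push_cast
      linarith [hpm.2]

private lemma good4 (N : ℕ) (m r i : ℕ → ℤ)
    (h : ∀ k, 1 < k → k ≤ N →
      ∃ p : ℤ, m k - m (k - 1) = r (k - 1) + r k + |i (k - 1) - i k| - 2 * p ∧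
        p < min (r (k - 1)) (r k)) :
    ∀ n k l, 1 ≤ k → l ≤ N → l = k + (n + 1) →
      ∃ p : ℤ, d4 m r i l k = 2 * p ∧ p < min (r k) (r l) := by
  intro n
  induction n with
  | zero =>
      intro k l hk hlN hl
      subst hl
      obtain ⟨p, hp, hpm⟩ := h (k + 1) (by omega) (by omega)
      simp only [Nat.add_sub_cancel] at hp hpm
      refine ⟨p, ?_, hpm⟩
      simp only [d4]
      rw [abs_sub_comm]
      linarith
  | succ n ih =>
      intro k l hk hlN hl
      subst hl
      obtain ⟨p, hpd, hpm⟩ := ih k (k + (n + 1)) hk (by omega) rfl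
      obtain ⟨q, t, heq, ht, hq⟩ := stepR4 N m r i h k (k + (n + 1)) (by omega) (by omega)
      have he : k + (n + 1 + 1) = k + (n + 1) + 1 := by omega
      rw [he]
      refine ⟨p + q - r (k + (n + 1)) + t, by rw [heq, hpd]; ring, ?_⟩
      rw [lt_min_iff] at hpm hq ⊢
      omega

/-- (Lemma 5.1.2(b) in type A.) -/
theorem stmt4 (N : ℕ) (hN : 2 ≤ N) (m r i : ℕ → ℤ)
    (hr : ∀ k, 1 ≤ k → k ≤ N → 0 < r k)
    (hmono : ∀ k, 1 < k → k ≤ N → m (k - 1) < m k)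
    (h : ∀ k, 1 < k → k ≤ N →
      ∃ p : ℤ, m k - m (k - 1) = r (k - 1) + r k + |i (k - 1) - i k| - 2 * p ∧
        p < min (r (k - 1)) (r k)) :
    (2 ∣ r N + r 1 + |i N - i 1| - (m N - m 1)) ∧
    (r N + r 1 + |i N - i 1| - (m N - m 1)) / 2 < min (r 1) (r N) ∧
    (∀ k l, 1 ≤ k → k < l → l ≤ N → (k, l) ≠ (1, N) →
      (2 ∣ r l + r k + |i l - i k| - (m l - m k)) ∧
      (r N + r 1 + |i N - i 1| - (m N - m 1)) / 2 <
        (r l + r k + |i l - i k| - (m l - m k)) / 2 ∧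
      (r l + r k + |i l - i k| - (m l - m k)) / 2 < min (r k) (r l)) := by
  have hd : ∀ l k, r l + r k + |i l - i k| - (m l - m k) = d4 m r i l k := fun _ _ => rfl
  obtain ⟨P, hP, hPlt⟩ := good4 N m r i h (N - 2) 1 N le_rfl le_rfl (by omega)
  rw [lt_min_iff] at hPlt
  refine ⟨by rw [hd]; omega, by rw [hd, lt_min_iff]; omega, ?_⟩
  intro k l hk hkl hlN hne
  have hne' : ¬(k = 1 ∧ l = N) := by
    intro ⟨h1, h2⟩; exact hne (by simp [h1, h2])
  obtain ⟨Q, hQ, hQlt⟩ := good4 N m r i h (l - k - 1) k l (by omega) hlN (by omega)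
  rw [lt_min_iff] at hQlt
  have h1 := decrL4 N m r i h (k - 1) 1 N le_rfl (by omega)
  have e1 : 1 + (k - 1) = k := by omega
  rw [e1] at h1
  have h2 := decrR4 N m r i h (N - l) k l (by omega) (by omega)
  have e2 : l + (N - l) = N := by omega
  rw [e2] at h2
  refine ⟨by rw [hd]; omega, by rw [hd, hd]; omega, by rw [hd, lt_min_iff]; omega⟩
end

section
/- Fix n ≥ 1 and I = {1,…,n}. Let N ≥ 2 and (m_k, r_k, i_k) ∈ ℤ × ℤ_{>0} × I for 1 ≤ k ≤ N with m_k > m_{k−1}, and suppose for every 1 < k ≤ N that m_k − m_{k−1} = r_{k−1} + r_k + |i_{k−1} − i_k| − 2 p_k for some integer p_k with −δ(i_{k−1}, i_k) ≤ p_k < min(r_{k−1}, r_k), where δ(i,j) = min(min(i,j)−1, n−max(i,j)). For 1 ≤ k < l ≤ N set p_{l,k} = (r_l + r_k + |i_l − i_k| − (m_l − m_k))/2. If 1 ≤ k < l ≤ N with (k,l) ≠ (1,N) and p_{N,1} ≥ −δ(i_k, i_l) − 1, then m_l − m_k ∈ 𝓡_{i_k, i_l}^{r_k, r_l}. -/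
lemma stmt5_par (x y : ℤ) : 2 ∣ (|x - y| - (x - y)) := by
  rcases abs_cases (x - y) with ⟨h, _⟩ | ⟨h, _⟩ <;> omega

/-- Key bound on `q(k,l) = r l + r k + |i l - i k| - (m l - m k)`. -/
lemma stmt5_qbound (N : ℕ) (m r i : ℕ → ℤ)
    (h : ∀ k, 1 < k → k ≤ N →
      ∃ p : ℤ, m k - m (k - 1) = r (k - 1) + r k + |i (k - 1) - i k| - 2 * p ∧
        p < min (r (k - 1)) (r k)) :
    ∀ l k, 1 ≤ k → k < l → l ≤ N →
      2 ∣ (r l + r k + |i l - i k| - (m l - m k)) ∧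
      r l + r k + |i l - i k| - (m l - m k) ≤ 2 * min (r k) (r l) - 2 := by
  intro l
  induction l with
  | zero => intro k h1 h2 h3; omega
  | succ l ih =>
    intro k hk1 hkl hlN
    obtain ⟨p, hp, hpm⟩ := h (l + 1) (by omega) hlN
    rw [show l + 1 - 1 = l from rfl] at hp hpm
    have hc1 := abs_sub_comm (i (l + 1)) (i l)
    rcases eq_or_lt_of_le (Nat.lt_succ_iff.mp hkl) with heq | hlt
    · subst heq
      omega
    · have ihq := ih k hk1 hlt (by omega)
      have tri1 : |i (l + 1) - i k| ≤ |i (l + 1) - i l| + |i l - i k| :=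
        abs_sub_le _ _ _
      have p1 := stmt5_par (i (l + 1)) (i k)
      have p2 := stmt5_par (i l) (i k)
      have p3 := stmt5_par (i (l + 1)) (i l)
      omega

/-- (Lemma 5.1.3(a) in type A.) -/
theorem stmt5 (n : ℤ) (hn : 1 ≤ n) (N : ℕ) (hN : 2 ≤ N) (m r i : ℕ → ℤ)
    (hI : ∀ k, 1 ≤ k → k ≤ N → 1 ≤ i k ∧ i k ≤ n)
    (hr : ∀ k, 1 ≤ k → k ≤ N → 0 < r k)
    (hmono : ∀ k, 1 < k → k ≤ N → m (k - 1) < m k)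
    (h : ∀ k, 1 < k → k ≤ N →
      ∃ p : ℤ, m k - m (k - 1) = r (k - 1) + r k + |i (k - 1) - i k| - 2 * p ∧
        -(min (min (i (k - 1)) (i k) - 1) (n - max (i (k - 1)) (i k))) ≤ p ∧
        p < min (r (k - 1)) (r k)) :
    ∀ k l, 1 ≤ k → k < l → l ≤ N → (k, l) ≠ (1, N) →
      (r N + r 1 + |i N - i 1| - (m N - m 1)) / 2 ≥
        -(min (min (i k) (i l) - 1) (n - max (i k) (i l))) - 1 →
      ∃ p : ℤ, -(min (min (i k) (i l) - 1) (n - max (i k) (i l))) ≤ p ∧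
        p < min (r k) (r l) ∧ m l - m k = r k + r l + |i k - i l| - 2 * p := by
  have h' : ∀ k, 1 < k → k ≤ N →
      ∃ p : ℤ, m k - m (k - 1) = r (k - 1) + r k + |i (k - 1) - i k| - 2 * p ∧
        p < min (r (k - 1)) (r k) := by
    intro k h1 h2
    obtain ⟨p, e, _, lt⟩ := h k h1 h2
    exact ⟨p, e, lt⟩
  have hq := stmt5_qbound N m r i h'
  intro k l hk hkl hlN hne hlow
  have hklq := hq l k hk hkl hlN
  have hq1N := hq N 1 (by omega) (by omega) le_rfl
  -- strictness: q(1,N) + 2 ≤ q(k,l)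
  have hstrict : (r N + r 1 + |i N - i 1| - (m N - m 1)) + 2 ≤
      r l + r k + |i l - i k| - (m l - m k) := by
    rcases Nat.eq_or_lt_of_le hk with hk1 | hk1
    · -- k = 1, hence l < N
      have hlN' : l < N := by
        rcases Nat.eq_or_lt_of_le hlN with h' | h'
        · exact absurd (by rw [← hk1, h']) hne
        · exact h'
      subst hk1
      have hB := hq N l (by omega) hlN' le_rfl
      have tri1 : |i N - i 1| ≤ |i N - i l| + |i l - i 1| := abs_sub_le _ _ _
      omega
    · -- 1 < k
      have hA := hq k 1 le_rfl hk1 (by omega)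
      have tri1 : |i N - i 1| ≤ |i N - i k| + |i k - i 1| := abs_sub_le _ _ _
      rcases Nat.eq_or_lt_of_le hlN with rfl | hlN'
      · omega
      · have hB := hq N l (by omega) hlN' le_rfl
        have tri2 : |i N - i k| ≤ |i N - i l| + |i l - i k| := abs_sub_le _ _ _
        omega
  obtain ⟨c, hc⟩ := hklq.1
  have hmin := hklq.2
  have hcomm := abs_sub_comm (i k) (i l)
  have hdvd1N := hq1N.1
  exact ⟨c, by omega, by omega, by omega⟩
end

section
/- Let a, b ∈ ℤ and r, s ∈ ℤ_{>0} with a − b = r + s − 2p for some integer p with 0 ≤ p < min(r, s). Define the multiset M(c,k) = { c + k − 1 − 2q : 0 ≤ q < k } (empty if k = 0). Then, as multisets of integers, M(a,r) + M(b,s) = M(b + r − p, r + s − p) + M(b + s − p, p). -/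
/-- M(c,k): the multiset { c+k−1−2q : 0 ≤ q < k }. -/
def Mstr (c : ℤ) (k : ℕ) : Multiset ℤ :=
  (Multiset.range k).map (fun q => c + (k : ℤ) - 1 - 2 * (q : ℤ))

lemma Mstr_eq (c : ℤ) (k : ℕ) :
    Mstr c k = (Multiset.range k).map (fun q : ℕ => c + (k:ℤ) - 1 - 2 * (q:ℤ)) := by
  simp [Mstr, Multiset.bind_singleton, Multiset.map_bind]

lemma Mstr_split (c : ℤ) (m n : ℕ) :
    Mstr c (m + n) = Mstr (c + n) m + Mstr (c - m) n := by
  simp only [Mstr_eq, Multiset.range_add, Multiset.map_add, Multiset.map_map]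
  congr 1
  · apply Multiset.map_congr rfl
    intro q _
    push_cast
    ring
  · apply Multiset.map_congr rfl
    intro q _
    simp only [Function.comp_apply]
    push_cast
    ring

/-- fusion of two KR polynomials in special position. -/
theorem stmt7 (a b : ℤ) (r s p : ℕ) (hr : 0 < r) (hs : 0 < s)
    (hp : p < min r s) (hab : a - b = (r : ℤ) + s - 2 * p) :
    Mstr a r + Mstr b s =
      Mstr (b + (r : ℤ) - p) (r + s - p) + Mstr (b + (s : ℤ) - p) p := by
  have hps : p < s := lt_of_lt_of_le hp (min_le_right r s)
  have hsp : ((s - p : ℕ) : ℤ) = (s : ℤ) - p := by omega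
  have h1 : r + s - p = r + (s - p) := by omega
  have h2 : s = p + (s - p) := by omega
  rw [h1, Mstr_split]
  have key : Mstr b s = Mstr (b + (s : ℤ) - p) p + Mstr (b - p) (s - p) := by
    conv_lhs => rw [h2, Mstr_split]
    have e1 : b + ((s - p : ℕ) : ℤ) = b + (s : ℤ) - p := by omega
    have e2 : b - (p : ℤ) = b - p := rfl
    rw [e1, e2]
  have ha : Mstr a r = Mstr (b + (r : ℤ) - p + ((s - p : ℕ) : ℤ)) r := by
    congr 1; rw [hsp]; omega
  have hb : Mstr (b + (r : ℤ) - p - r) (s - p) = Mstr (b - p) (s - p) := by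
    congr 1; ring
  rw [key, ha, hb]
  abel
end

section
/- Let d ≥ 0, r ≥ s ≥ 1 and m = r + s − 2p with s ≤ p ≤ r (so that the q-string S(a+m,s) is contained in S(a,r)). Then there is no k ≥ 2 together with positive integers r_1, …, r_k satisfying r_1 = s and r_k = r (or r_1 = r and r_k = s) and integers p_1, …, p_{k−1} with −d ≤ p_j < min(r_j, r_{j+1}) for all j, such that Σ_{j=1}^{k−1} (r_j + r_{j+1} − 2 p_j) equals −m (respectively, equals m). -/
/-!
Since `p_j < min (r_j, r_{j+1})`, each summand satisfies
`r_j + r_{j+1} - 2 p_j ≥ |r_j - r_{j+1}| + 2`, so by the triangle inequality the whole sum is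
at least `|r_1 - r_k| + 2 (k - 1) ≥ r - s + 2`. On the other hand `s ≤ p ≤ r` gives both
`m ≤ r - s` and `-m ≤ r - s`.
-/

lemma abs_sub_add_two_le_of_lt_min {a b p : ℤ} (h : p < min a b) :
    |a - b| + 2 ≤ a + b - 2 * p := by
  have ha : p < a := h.trans_le (min_le_left a b)
  have hb : p < b := h.trans_le (min_le_right a b)
  rcases abs_cases (a - b) with ⟨habs, _⟩ | ⟨habs, _⟩ <;> rw [habs] <;> omega

lemma abs_sub_add_two_mul_le_sum_of_lt_min (r p : ℕ → ℤ) (n : ℕ)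
    (h : ∀ j, 1 ≤ j → j ≤ n → p j < min (r j) (r (j + 1))) :
    |r 1 - r (n + 1)| + 2 * n ≤ ∑ j ∈ Finset.Icc 1 n, (r j + r (j + 1) - 2 * p j) := by
  induction n with
  | zero => simp
  | succ n ih =>
    rw [Finset.sum_Icc_succ_top (by omega)]
    have hsum := ih fun j hj hjn => h j hj (by omega)
    have hstep := abs_sub_add_two_le_of_lt_min (h (n + 1) (by omega) le_rfl)
    have htri := abs_sub_le (r 1) (r (n + 1)) (r (n + 1 + 1))
    push_cast
    linarith

theorem stmt10_general (d : ℤ) (r s m p : ℤ)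
    (hm : m = r + s - 2 * p) (hps : s ≤ p) (hpr : p ≤ r) :
    ¬ ∃ (k : ℕ) (r' p' : ℕ → ℤ), 2 ≤ k ∧
      (∀ j, 1 ≤ j → j ≤ k → 0 < r' j) ∧
      (∀ j, 1 ≤ j → j ≤ k - 1 → -d ≤ p' j ∧ p' j < min (r' j) (r' (j + 1))) ∧
      ((r' 1 = s ∧ r' k = r ∧
          (∑ j ∈ Finset.Icc 1 (k - 1), (r' j + r' (j + 1) - 2 * p' j)) = -m) ∨
        (r' 1 = r ∧ r' k = s ∧
          (∑ j ∈ Finset.Icc 1 (k - 1), (r' j + r' (j + 1) - 2 * p' j)) = m)) := by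
  rintro ⟨k, r', p', hk, -, hp, hends⟩
  obtain ⟨n, rfl⟩ : ∃ n, k = n + 1 := ⟨k - 1, by omega⟩
  have hn : (1 : ℤ) ≤ n := by exact_mod_cast (by omega : 1 ≤ n)
  have hbound := abs_sub_add_two_mul_le_sum_of_lt_min r' p' n
    fun j hj hjn => (hp j hj (by omega)).2
  rw [Nat.add_sub_cancel] at hends
  rcases hends with ⟨h1, hk, hsum⟩ | ⟨h1, hk, hsum⟩ <;> rw [h1, hk, hsum] at hbound
  · linarith [neg_le_abs (s - r)]
  · linarith [le_abs_self (r - s)]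

/-- dividing q-factors are not joined by a directed path. -/
theorem stmt10 (d : ℤ) (hd : 0 ≤ d) (r s m p : ℤ) (hs : 1 ≤ s) (hsr : s ≤ r)
    (hm : m = r + s - 2 * p) (hps : s ≤ p) (hpr : p ≤ r) :
    ¬ ∃ (k : ℕ) (r' p' : ℕ → ℤ), 2 ≤ k ∧
      (∀ j, 1 ≤ j → j ≤ k → 0 < r' j) ∧
      (∀ j, 1 ≤ j → j ≤ k - 1 → -d ≤ p' j ∧ p' j < min (r' j) (r' (j + 1))) ∧
      ((r' 1 = s ∧ r' k = r ∧
          (∑ j ∈ Finset.Icc 1 (k - 1), (r' j + r' (j + 1) - 2 * p' j)) = -m) ∨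
        (r' 1 = r ∧ r' k = s ∧
          (∑ j ∈ Finset.Icc 1 (k - 1), (r' j + r' (j + 1) - 2 * p' j)) = m)) :=
  stmt10_general d r s m p hm hps hpr
end

section
/- Let d ≥ 0 and r, s ∈ ℤ_{>0}, and suppose m = r + s − 2p for some integer p with −d ≤ p ≤ 0. Then m − r − s + 2 ∈ { 2j : 1 ≤ j ≤ d+1 }, and the concatenated sequence (1−r, 3−r, …, r−1, m−s+1, m−s+3, …, m+s−1) of length r+s is strictly increasing with every consecutive difference lying in { 2j : 1 ≤ j ≤ d+1 }. -/
/-- the concatenated sequence is a segment. -/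
theorem stmt11 (d : ℤ) (hd : 0 ≤ d) (r s m p : ℤ) (hr : 0 < r) (hs : 0 < s)
    (hm : m = r + s - 2 * p) (hp1 : -d ≤ p) (hp2 : p ≤ 0) :
    (∃ j : ℤ, 1 ≤ j ∧ j ≤ d + 1 ∧ m - r - s + 2 = 2 * j) ∧
    (∀ q : ℤ, 0 ≤ q → q + 1 ≤ r + s - 1 →
      (fun q : ℤ => if q < r then 1 - r + 2 * q else m - s + 1 + 2 * (q - r)) q <
        (fun q : ℤ => if q < r then 1 - r + 2 * q else m - s + 1 + 2 * (q - r)) (q + 1) ∧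
      ∃ j : ℤ, 1 ≤ j ∧ j ≤ d + 1 ∧
        (fun q : ℤ => if q < r then 1 - r + 2 * q else m - s + 1 + 2 * (q - r)) (q + 1) -
          (fun q : ℤ => if q < r then 1 - r + 2 * q else m - s + 1 + 2 * (q - r)) q = 2 * j) := by
  refine ⟨⟨1 - p, by omega, by omega, by omega⟩, ?_⟩
  intro q hq hq1
  simp only
  rcases lt_trichotomy (q + 1) r with h | h | h
  · exact ⟨by split_ifs <;> omega, 1, by omega, by omega, by split_ifs <;> omega⟩
  · exact ⟨by split_ifs <;> omega, 1 - p, by omega, by omega, by split_ifs <;> omega⟩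
  · exact ⟨by split_ifs <;> omega, 1, by omega, by omega, by split_ifs <;> omega⟩
end

section
/- Let d ≥ 0, and let a_1 < a_2 < ⋯ < a_l be integers (l ≥ 1). Consider the digraph G on {1,…,l} with an arrow (s, r) whenever a_s − a_r ∈ { 2j : 1 ≤ j ≤ d+1 }. If the underlying undirected graph of G is connected, then a_{r+1} − a_r ∈ { 2j : 1 ≤ j ≤ d+1 } for all 1 ≤ r < l; consequently the transitive closure of the arrow relation is a linear order on {1,…,l} (with l > l−1 > ⋯ > 1 corresponding to a_l > ⋯ > a_1). -/
/-- connected monochromatic fundamental graphs are totally ordered. -/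
theorem stmt12 (d : ℤ) (hd : 0 ≤ d) (l : ℕ) (hl : 1 ≤ l) (a : Fin l → ℤ)
    (hmono : ∀ k m : Fin l, k < m → a k < a m)
    (hconn : ∀ v w : Fin l, Relation.ReflTransGen
      (fun x y : Fin l => (∃ j : ℤ, 1 ≤ j ∧ j ≤ d + 1 ∧ a x - a y = 2 * j) ∨
        (∃ j : ℤ, 1 ≤ j ∧ j ≤ d + 1 ∧ a y - a x = 2 * j)) v w) :
    (∀ (k : ℕ) (h : k + 1 < l),
      ∃ j : ℤ, 1 ≤ j ∧ j ≤ d + 1 ∧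
        a ⟨k + 1, h⟩ - a ⟨k, Nat.lt_of_succ_lt h⟩ = 2 * j) ∧
    (∀ v w : Fin l, v ≠ w →
      Relation.TransGen (fun x y : Fin l => ∃ j : ℤ, 1 ≤ j ∧ j ≤ d + 1 ∧ a x - a y = 2 * j) v w ∨
      Relation.TransGen (fun x y : Fin l => ∃ j : ℤ, 1 ≤ j ∧ j ≤ d + 1 ∧ a x - a y = 2 * j) w v) := by
  classical
  have hmono' : ∀ p q : Fin l, p.val ≤ q.val → a p ≤ a q := by
    intro p q hpq
    rcases eq_or_lt_of_le hpq with h | h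
    · exact le_of_eq (congrArg a (Fin.ext h))
    · exact le_of_lt (hmono p q h)
  -- parity: all values have the same parity
  have heven : ∀ v w : Fin l, (2 : ℤ) ∣ a v - a w := by
    intro v w
    induction hconn v w with
    | refl => simp
    | tail h1 h2 ih =>
      rename_i b c
      have hbc : (2 : ℤ) ∣ a b - a c := by
        rcases h2 with ⟨j, _, _, hj⟩ | ⟨j, _, _, hj⟩
        · exact ⟨j, by linarith⟩
        · exact ⟨-j, by linarith⟩
      have := dvd_add ih hbc
      simpa using this
  -- Part 1: consecutive differences are edges
  have hcons : ∀ (k : ℕ) (h : k + 1 < l), ∃ j : ℤ, 1 ≤ j ∧ j ≤ d + 1 ∧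
      a ⟨k + 1, h⟩ - a ⟨k, Nat.lt_of_succ_lt h⟩ = 2 * j := by
    intro k h
    set x : Fin l := ⟨k, Nat.lt_of_succ_lt h⟩ with hxdef
    set y : Fin l := ⟨k + 1, h⟩ with hydef
    have hxy : a x < a y := hmono x y (by simp [hxdef, hydef, Fin.lt_def])
    obtain ⟨j, hj⟩ := heven y x
    by_contra hcon
    push_neg at hcon
    have hbig : 2 * (d + 1) < a y - a x := by
      by_contra hle
      push_neg at hle
      exact (hcon j (by omega) (by omega)) (by omega)
    -- edges do not cross the gap between x and y
    have hinv : ∀ v w : Fin l, Relation.ReflTransGen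
        (fun x y : Fin l => (∃ j : ℤ, 1 ≤ j ∧ j ≤ d + 1 ∧ a x - a y = 2 * j) ∨
          (∃ j : ℤ, 1 ≤ j ∧ j ≤ d + 1 ∧ a y - a x = 2 * j)) v w →
        (v.val ≤ k ↔ w.val ≤ k) := by
      intro v w hvw
      induction hvw with
      | refl => exact Iff.rfl
      | tail h1 h2 ih =>
        rename_i b c
        have hedge : a b - a c ≤ 2 * (d + 1) ∧ a c - a b ≤ 2 * (d + 1) := by
          rcases h2 with ⟨j, hj1, hj2, hj3⟩ | ⟨j, hj1, hj2, hj3⟩ <;>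
            constructor <;> omega
        have hbc : b.val ≤ k ↔ c.val ≤ k := by
          constructor <;> intro hle <;> by_contra hgt <;> push_neg at hgt
          · have h1 : a b ≤ a x := hmono' b x hle
            have h2' : a y ≤ a c := hmono' y c hgt
            omega
          · have h1 : a c ≤ a x := hmono' c x hle
            have h2' : a y ≤ a b := hmono' y b hgt
            omega
        exact ih.trans hbc
    have := hinv x y (hconn x y)
    simp [hxdef, hydef] at this
  refine ⟨hcons, ?_⟩
  -- Part 2
  set rel := fun x y : Fin l => ∃ j : ℤ, 1 ≤ j ∧ j ≤ d + 1 ∧ a x - a y = 2 * j with hrel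
  have key : ∀ n : ℕ, ∀ v w : Fin l, v.val + (n + 1) = w.val →
      Relation.TransGen rel w v := by
    intro n
    induction n with
    | zero =>
      intro v w hvw
      have h : v.val + 1 < l := by have := w.isLt; omega
      obtain ⟨j, h1, h2, h3⟩ := hcons v.val h
      have hw : w = ⟨v.val + 1, h⟩ := Fin.ext (by simp; omega)
      have hv : v = ⟨v.val, Nat.lt_of_succ_lt h⟩ := Fin.ext rfl
      exact Relation.TransGen.single ⟨j, h1, h2, by rw [hw]; exact h3⟩
    | succ n ih =>
      intro v w hvw
      have h : v.val + (n + 1) < l := by have := w.isLt; omega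
      set u : Fin l := ⟨v.val + (n + 1), h⟩ with hudef
      have hu : Relation.TransGen rel u v := ih v u rfl
      have h2 : u.val + 1 < l := by have := w.isLt; simp [hudef]; omega
      obtain ⟨j, hj1, hj2, hj3⟩ := hcons u.val h2
      have hw : w = ⟨u.val + 1, h2⟩ := Fin.ext (by simp [hudef]; omega)
      have hu' : u = ⟨u.val, Nat.lt_of_succ_lt h2⟩ := Fin.ext rfl
      have step : rel w u := ⟨j, hj1, hj2, by rw [hw]; exact hj3⟩
      exact Relation.TransGen.head step hu
  intro v w hvw
  rcases lt_trichotomy v.val w.val with h | h | h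
  · exact Or.inr (key (w.val - v.val - 1) v w (by omega))
  · exact absurd (Fin.ext h) hvw
  · exact Or.inl (key (v.val - w.val - 1) w v (by omega))
end

section
/- Fix n ≥ 1, I = {1,…,n}. Let (i_1,a_1), …, (i_l,a_l) ∈ I × ℤ with a_1 ≤ a_2 ≤ ⋯ ≤ a_l, and consider the digraph G on {1,…,l} with an arrow (s, r) whenever a_s − a_r ∈ 𝓡_{i_r, i_s}. If the transitive closure of the arrow relation of G is a linear (total) strict order on {1,…,l}, then a_1 < a_2 < ⋯ < a_l and a_{k+1} − a_k ∈ 𝓡_{i_k, i_{k+1}} for all 1 ≤ k < l; that is, ((i_1,a_1),…,(i_l,a_l)) is a prime snake. -/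
/-- 𝓡_{i,j} for the type A_n diagram. -/
def Rset (n i j : ℤ) : Set ℤ :=
  {m : ℤ | ∃ p : ℤ, -(min (min i j - 1) (n - max i j)) ≤ p ∧ p < 1 ∧ m = 2 + |i - j| - 2 * p}

/-- if the fundamental factorization graph is totally ordered,
the sequence is a prime snake. -/
theorem stmt13 (n : ℤ) (hn : 1 ≤ n) (l : ℕ) (i a : Fin l → ℤ)
    (hI : ∀ k, 1 ≤ i k ∧ i k ≤ n)
    (hmono : ∀ k m : Fin l, k ≤ m → a k ≤ a m)
    (hirr : ∀ v : Fin l,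
      ¬ Relation.TransGen (fun s r : Fin l => a s - a r ∈ Rset n (i r) (i s)) v v)
    (htot : ∀ v w : Fin l, v ≠ w →
      Relation.TransGen (fun s r : Fin l => a s - a r ∈ Rset n (i r) (i s)) v w ∨
      Relation.TransGen (fun s r : Fin l => a s - a r ∈ Rset n (i r) (i s)) w v) :
    (∀ k m : Fin l, k < m → a k < a m) ∧
    (∀ (k : ℕ) (h : k + 1 < l),
      a ⟨k + 1, h⟩ - a ⟨k, Nat.lt_of_succ_lt h⟩ ∈
        Rset n (i ⟨k, Nat.lt_of_succ_lt h⟩) (i ⟨k + 1, h⟩)) := by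
  have hstep : ∀ s r : Fin l, a s - a r ∈ Rset n (i r) (i s) → a r < a s := by
    rintro s r ⟨p, hp1, hp2, hp3⟩
    have habs : 0 ≤ |i r - i s| := abs_nonneg _
    linarith
  have htg : ∀ s r : Fin l,
      Relation.TransGen (fun s r : Fin l => a s - a r ∈ Rset n (i r) (i s)) s r →
      a r < a s := by
    intro s r h
    induction h with
    | single h => exact hstep _ _ h
    | tail h1 h2 ih => exact lt_trans (hstep _ _ h2) ih
  have part1 : ∀ k m : Fin l, k < m → a k < a m := by
    intro k m hkm
    rcases htot k m (ne_of_lt hkm) with h | h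
    · exact absurd (hmono k m hkm.le) (not_le.mpr (htg k m h))
    · exact htg m k h
  refine ⟨part1, ?_⟩
  intro k h
  set K : Fin l := ⟨k, Nat.lt_of_succ_lt h⟩ with hK
  set K1 : Fin l := ⟨k + 1, h⟩ with hK1
  have hKK1 : K < K1 := by
    rw [Fin.lt_def]; simp [hK, hK1]
  rcases htot K1 K (ne_of_gt hKK1) with h' | h'
  · cases h' with
    | single hs => exact hs
    | @tail b _ h1 h2 =>
      exfalso
      have h3 : K < b :=
        lt_of_not_ge fun hle => absurd (hmono b K hle) (not_le.mpr (hstep b K h2))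
      have h4 : b < K1 :=
        lt_of_not_ge fun hle => absurd (hmono K1 b hle) (not_le.mpr (htg K1 b h1))
      rw [Fin.lt_def] at h3 h4
      simp [hK, hK1] at h3 h4
      omega
  · exact absurd (part1 K K1 hKK1) (not_lt.mpr (le_of_lt (htg K K1 h')))
end

section
/- Fix n ≥ 1 and I = {1,…,n}. If ((i_1,a_1),…,(i_l,a_l)) ∈ (I×ℤ)^l is a prime snake, then in the digraph G on {1,…,l} with an arrow (s,r) whenever a_s − a_r ∈ 𝓡_{i_r,i_s}, the transitive closure of the arrow relation is a linear strict order on {1,…,l}. Moreover, G is connected as an undirected graph. -/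
lemma Rset_pos {n i j m : ℤ} (h : m ∈ Rset n i j) : 0 < m := by
  obtain ⟨p, _, hp1, rfl⟩ := h
  have := abs_nonneg (i - j)
  omega

/-- the fundamental factorization graph of a prime snake is totally ordered
and connected. -/
theorem stmt14 (n : ℤ) (hn : 1 ≤ n) (l : ℕ) (i a : Fin l → ℤ)
    (hI : ∀ k, 1 ≤ i k ∧ i k ≤ n)
    (hsnake : ∀ (k : ℕ) (h : k + 1 < l),
      a ⟨k + 1, h⟩ - a ⟨k, Nat.lt_of_succ_lt h⟩ ∈
        Rset n (i ⟨k, Nat.lt_of_succ_lt h⟩) (i ⟨k + 1, h⟩)) :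
    (∀ v : Fin l,
      ¬ Relation.TransGen (fun s r : Fin l => a s - a r ∈ Rset n (i r) (i s)) v v) ∧
    (∀ v w : Fin l, v ≠ w →
      Relation.TransGen (fun s r : Fin l => a s - a r ∈ Rset n (i r) (i s)) v w ∨
      Relation.TransGen (fun s r : Fin l => a s - a r ∈ Rset n (i r) (i s)) w v) ∧
    (∀ v w : Fin l, Relation.ReflTransGen
      (fun x y : Fin l => (a x - a y ∈ Rset n (i y) (i x)) ∨ (a y - a x ∈ Rset n (i x) (i y)))
      v w) := by
  set rel := fun s r : Fin l => a s - a r ∈ Rset n (i r) (i s) with hrel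
  -- monotonicity of a along rel
  have hmono : ∀ {s r : Fin l}, Relation.TransGen rel s r → a r < a s := by
    intro s r h
    induction h with
    | single h => have := Rset_pos h; omega
    | tail _ h ih => have := Rset_pos h; omega
  -- direct edges between consecutive indices
  have hstep : ∀ (k : ℕ) (h : k + 1 < l), rel ⟨k + 1, h⟩ ⟨k, Nat.lt_of_succ_lt h⟩ :=
    fun k h => hsnake k h
  -- chain lemma
  have hchain : ∀ (d : ℕ) (v w : Fin l), w.val = v.val + d + 1 → Relation.TransGen rel w v := by
    intro d
    induction d with
    | zero =>
      intro v w hw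
      have h1 : v.val + 1 < l := by omega
      have hw' : w = ⟨v.val + 1, h1⟩ := Fin.ext hw
      rw [hw']
      exact Relation.TransGen.single (hstep v.val h1)
    | succ d ih =>
      intro v w hw
      have hv1 : v.val + 1 < l := by omega
      have h1 : Relation.TransGen rel w ⟨v.val + 1, hv1⟩ :=
        ih ⟨v.val + 1, hv1⟩ w (by show w.val = v.val + 1 + d + 1; omega)
      exact h1.tail (hstep v.val hv1)
  have hlt : ∀ v w : Fin l, v < w → Relation.TransGen rel w v := by
    intro v w hvw
    exact hchain (w.val - v.val - 1) v w (by omega)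
  refine ⟨?_, ?_, ?_⟩
  · intro v h
    exact absurd (hmono h) (lt_irrefl _)
  · intro v w hne
    rcases lt_or_gt_of_ne (fun h => hne (Fin.ext (by exact_mod_cast congrArg Fin.val h))) with h | h
    · exact Or.inr (hlt v w h)
    · exact Or.inl (hlt w v h)
  · intro v w
    rcases lt_trichotomy v w with h | h | h
    · exact (Relation.TransGen.mono (fun x y hxy => Or.inr hxy) _ _ (Relation.TransGen.swap _ _ (hlt v w h))).to_reflTransGen
    · exact h ▸ Relation.ReflTransGen.refl
    · exact (Relation.TransGen.mono (fun x y hxy => Or.inl hxy) _ _ (hlt w v h)).to_reflTransGen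
end
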